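/- Let (L,E) be a complete cotorsion pair in an abelian category A, and let E ∈ E be an object. Then a morphism l : L → E in A is an L-cover if and only if it is an (L ∩ E)-cover. -/

import Mathlib

open CategoryTheory Limits Opposite

universe w v u

namespace EnochsPaper

variable {A : Type u} [Category.{v} A]

/-- `l : X ⟶ C` is an `L`-precover of `C`. -/
def IsPrecover (L : A → Prop) {X C : A} (l : X ⟶ C) : Prop :=
  L X ∧ ∀ (X' : A), L X' → ∀ l' : X' ⟶ C, ∃ f : X' ⟶ X, f ≫ l = l'

/-- `l : X ⟶ C` is an `L`-cover. -/
def IsCover (L : A → Prop) {X C : A} (l : X ⟶ C) : Prop :=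
  IsPrecover L l ∧ ∀ e : X ⟶ X, e ≫ l = l → IsIso e

/-- The object `C` admits an `L`-cover. -/
def HasCover (L : A → Prop) (C : A) : Prop :=
  ∃ (X : A) (l : X ⟶ C), IsCover L l

variable [Abelian A] [HasExt.{w} A]

/-- `(L, E)` is a cotorsion pair: `E = L^{⊥₁}` and `L = ^{⊥₁}E` with respect to the
vanishing of `Ext¹`. -/
def IsCotorsionPair (L E : A → Prop) : Prop :=
  (∀ X : A, E X ↔ ∀ Y : A, L Y → Subsingleton (Abelian.Ext Y X 1)) ∧
  (∀ Y : A, L Y ↔ ∀ X : A, E X → Subsingleton (Abelian.Ext Y X 1))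

/-- The cotorsion pair `(L, E)` is hereditary: `Extⁿ(L, E) = 0` for all `n ≥ 1`. -/
def IsHereditaryPair (L E : A → Prop) : Prop :=
  ∀ Y X : A, L Y → E X → ∀ n : ℕ, 1 ≤ n → Subsingleton (Abelian.Ext Y X n)

/-- An epimorphism `l : X ⟶ C` with `X ∈ L` and `ker l ∈ L^{⊥₁}` is a special
`L`-precover. -/
def IsSpecialPrecover (L : A → Prop) {X C : A} (l : X ⟶ C) : Prop :=
  L X ∧ Epi l ∧ ∀ Y : A, L Y → Subsingleton (Abelian.Ext Y (kernel l) 1)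

/-- A monomorphism `b : C ⟶ X` with `X ∈ E` and `coker b ∈ ^{⊥₁}E` is a special
`E`-preenvelope. -/
def IsSpecialPreenvelope (E : A → Prop) {C X : A} (b : C ⟶ X) : Prop :=
  E X ∧ Mono b ∧ ∀ Z : A, E Z → Subsingleton (Abelian.Ext (cokernel b) Z 1)

/-- A cotorsion pair is complete if every object has a special `L`-precover and a
special `E`-preenvelope. -/
def IsCompleteCotorsionPair (L E : A → Prop) : Prop :=
  IsCotorsionPair L E ∧
    (∀ C : A, ∃ (X : A) (l : X ⟶ C), IsSpecialPrecover L l) ∧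
    (∀ C : A, ∃ (X : A) (b : C ⟶ X), IsSpecialPreenvelope E b)

open Abelian DerivedCategory

/-- The single functor composed with the homology functor is isomorphic to the identity. -/
noncomputable def singleCompHomologyIso (A : Type u) [Category.{v} A] [Abelian A]
    [HasDerivedCategory A] :
    DerivedCategory.singleFunctor A 0 ⋙ DerivedCategory.homologyFunctor A 0 ≅ 𝟭 A :=
  Functor.isoWhiskerRight ((SingleFunctors.evaluation _ _ (0 : ℤ)).mapIso
      (DerivedCategory.singleFunctorsPostcompQIso A)) _ ≪≫
    Functor.associator _ _ _ ≪≫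
    Functor.isoWhiskerLeft _ (DerivedCategory.homologyFunctorFactors A 0) ≪≫
    HomologicalComplex.homologyFunctorSingleIso _ _ _

/-- Turn a degree-`0` `Ext`-class into an honest morphism, by applying the
homology functor of the derived category. -/
noncomputable def realize {X Y : A} (x : Abelian.Ext X Y 0) : X ⟶ Y :=
  letI := HasDerivedCategory.standard A
  (singleCompHomologyIso A).inv.app X ≫
    (DerivedCategory.homologyFunctor A 0).map
      (x.hom ≫ (shiftFunctorZero' (DerivedCategory A) (((0 : ℕ) : ℤ)) (by simp)).hom.app _) ≫
    (singleCompHomologyIso A).hom.app Y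

lemma realize_mk₀ {X Y : A} (f : X ⟶ Y) : realize (Abelian.Ext.mk₀ f) = f := by
  letI := HasDerivedCategory.standard A
  dsimp only [realize]
  rw [Abelian.Ext.mk₀_hom]
  have h1 : (ShiftedHom.mk₀ (((0 : ℕ) : ℤ)) (by simp)
        ((DerivedCategory.singleFunctor A 0).map f)) ≫
      (shiftFunctorZero' (DerivedCategory A) (((0 : ℕ) : ℤ)) (by simp)).hom.app _ =
      (DerivedCategory.singleFunctor A 0).map f := by
    simp [ShiftedHom.mk₀]
  rw [h1]
  have h2 := (singleCompHomologyIso A).hom.naturality f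
  dsimp at h2
  rw [h2]
  simp

lemma realize_mk₀_comp {X Y Z : A} (f : X ⟶ Y) (x : Abelian.Ext Y Z 0) :
    realize ((Abelian.Ext.mk₀ f).comp x (zero_add 0)) = f ≫ realize x := by
  letI := HasDerivedCategory.standard A
  dsimp only [realize]
  rw [Abelian.Ext.comp_hom, Abelian.Ext.mk₀_hom, ShiftedHom.mk₀_comp]
  have h2 := (singleCompHomologyIso A).inv.naturality f
  dsimp at h2
  simp only [Category.assoc, Functor.map_comp]
  slice_lhs 1 2 => rw [← h2]
  simp

omit [HasExt.{w} A] in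
/-- The short exact sequence associated to a monomorphism. -/
lemma shortExact_of_mono {X Y : A} (b : X ⟶ Y) [Mono b] :
    (ShortComplex.mk b (cokernel.π b) (cokernel.condition b)).ShortExact where
  exact := (ShortComplex.mk b (cokernel.π b) (cokernel.condition b)).exact_of_g_is_cokernel
    (cokernelIsCokernel b)
  mono_f := by dsimp; infer_instance
  epi_g := by dsimp; infer_instance

/-- Extension lemma: a morphism defined on a subobject with `Ext¹(coker, T) = 0`
extends to the ambient object. -/
lemma exists_extension {B C T : A} (b : B ⟶ C) [Mono b]
    (h : Subsingleton (Abelian.Ext (cokernel b) T 1)) (f : B ⟶ T) :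
    ∃ t : C ⟶ T, b ≫ t = f := by
  have hS := shortExact_of_mono b
  obtain ⟨x₂, hx₂⟩ := Abelian.Ext.contravariant_sequence_exact₁ hS T (Abelian.Ext.mk₀ f)
    (by omega : 1 + 0 = 1) (Subsingleton.elim _ _)
  exact ⟨realize x₂, by rw [← realize_mk₀_comp b x₂, hx₂, realize_mk₀]⟩

/-- Orthogonality classes are closed under extensions. -/
lemma subsingleton_ext_of_shortExact {S : ShortComplex A} (hS : S.ShortExact) {Z : A}
    (h₁ : Subsingleton (Abelian.Ext S.X₁ Z 1)) (h₃ : Subsingleton (Abelian.Ext S.X₃ Z 1)) :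
    Subsingleton (Abelian.Ext S.X₂ Z 1) := by
  refine subsingleton_of_forall_eq 0 fun x => ?_
  obtain ⟨x₁, hx₁⟩ := Abelian.Ext.contravariant_sequence_exact₂ hS Z x (Subsingleton.elim _ _)
  rw [← hx₁, Subsingleton.elim x₁ 0, Abelian.Ext.comp_zero]

/-- Vanishing of `Ext¹(Y, -)` passes to retracts. -/
lemma subsingleton_ext_of_retract {X E' Y : A} (b : X ⟶ E') (r : E' ⟶ X) (hbr : b ≫ r = 𝟙 X)
    (h : Subsingleton (Abelian.Ext Y E' 1)) : Subsingleton (Abelian.Ext Y X 1) := by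
  refine subsingleton_of_forall_eq 0 fun x => ?_
  have h1 : x.comp (Abelian.Ext.mk₀ b) (add_zero 1) = 0 := Subsingleton.elim _ _
  have h2 : (x.comp (Abelian.Ext.mk₀ b) (add_zero 1)).comp (Abelian.Ext.mk₀ r) (add_zero 1)
      = x := by
    rw [Abelian.Ext.comp_assoc_of_second_deg_zero, Abelian.Ext.mk₀_comp_mk₀, hbr,
      Abelian.Ext.comp_mk₀_id]
  rw [← h2, h1, Abelian.Ext.zero_comp]

/-- Let `(L, E)` be a complete cotorsion pair in an abelian category
`A` and `E₀ ∈ E`. Then a morphism `l : X ⟶ E₀` is an `L`-cover if and only if it is an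
`(L ∩ E)`-cover. -/
theorem cover_iff_inter_cover (L E : A → Prop)
    (hcomplete : IsCompleteCotorsionPair L E)
    {E₀ : A} (hE₀ : E E₀) {X : A} (l : X ⟶ E₀) :
    IsCover L l ↔ IsCover (fun Y => L Y ∧ E Y) l := by
  obtain ⟨hpair, -, hpreenv⟩ := hcomplete
  constructor
  · rintro ⟨⟨hXL, hfact⟩, hauto⟩
    obtain ⟨E', b, hE', hmono, hcok⟩ := hpreenv X
    haveI := hmono
    have hLcok : L (cokernel b) := (hpair.2 (cokernel b)).2 hcok
    have hS := shortExact_of_mono b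
    have hE'L : L E' := by
      rw [hpair.2]
      intro Z hZ
      exact subsingleton_ext_of_shortExact hS ((hpair.2 X).1 hXL Z hZ)
        ((hpair.2 (cokernel b)).1 hLcok Z hZ)
    obtain ⟨t, hbt⟩ := exists_extension b (hcok E₀ hE₀) l
    obtain ⟨s, hsl⟩ := hfact E' hE'L t
    have hbs : (b ≫ s) ≫ l = l := by rw [Category.assoc, hsl, hbt]
    haveI := hauto _ hbs
    have hret : b ≫ (s ≫ inv (b ≫ s)) = 𝟙 X := by
      rw [← Category.assoc, IsIso.hom_inv_id]
    have hXE : E X := by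
      rw [hpair.1]
      intro Y hY
      exact subsingleton_ext_of_retract b (s ≫ inv (b ≫ s)) hret
        ((hpair.1 E').1 hE' Y hY)
    exact ⟨⟨⟨hXL, hXE⟩, fun X' hX' l' => hfact X' hX'.1 l'⟩, hauto⟩
  · rintro ⟨⟨⟨hXL, hXE⟩, hfact⟩, hauto⟩
    refine ⟨⟨hXL, fun Y hY f => ?_⟩, hauto⟩
    obtain ⟨E'', b, hE'', hmono, hcok⟩ := hpreenv Y
    haveI := hmono
    have hLcok : L (cokernel b) := (hpair.2 (cokernel b)).2 hcok
    have hS := shortExact_of_mono b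
    have hE''L : L E'' := by
      rw [hpair.2]
      intro Z hZ
      exact subsingleton_ext_of_shortExact hS ((hpair.2 Y).1 hY Z hZ)
        ((hpair.2 (cokernel b)).1 hLcok Z hZ)
    obtain ⟨t, hbt⟩ := exists_extension b (hcok E₀ hE₀) f
    obtain ⟨h, hhl⟩ := hfact E'' ⟨hE''L, hE''⟩ t
    exact ⟨b ≫ h, by rw [Category.assoc, hhl, hbt]⟩

end EnochsPaper
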